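/- Convergence of forward-backward vGFNE seeking for affine pseudo-gradients: let G be a real a × a matrix whose symmetric part satisfies (1/2)(G + Gᵀ) ⪰ μ I_a with μ > 0, let W be a real b × c matrix with W Wᵀ positive definite, and let h be a real a × b matrix. Define F(Φ) = 2GΦ(W Wᵀ) + h on a × b real matrices, and set M = 2μ·λ_min(W Wᵀ) and L = 2‖G‖₂‖W‖₂². Let U be a nonempty closed convex set of a × b real matrices and let η ∈ (0, 2M/L²). Then there exists a unique Φ* ∈ U satisfying ⟨F(Φ*), Φ − Φ*⟩_F ≥ 0 for all Φ ∈ U, and from any initialization Φ₀ the iterates Φ_{k+1} = proj_U(Φ_k − η F(Φ_k)) satisfy ‖Φ_{k+1} − Φ*‖_F ≤ √(1 − η(2M − ηL²))·‖Φ_k − Φ*‖_F for all k, where √(1 − η(2M − ηL²)) < 1, so the iterates converge linearly to Φ*. -/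

import Mathlib

open scoped Matrix

/-- The spectral norm (ℓ2 operator norm, largest singular value) of a real matrix. -/
noncomputable def specNorm {a b : ℕ} (G : Matrix (Fin a) (Fin b) ℝ) : ℝ :=
  ‖LinearMap.toContinuousLinearMap (Matrix.toEuclideanLin G)‖

/-- The Frobenius norm of a real matrix. -/
noncomputable def frobNorm {a b : ℕ} (X : Matrix (Fin a) (Fin b) ℝ) : ℝ :=
  Real.sqrt (Matrix.trace (Xᵀ * X))

open scoped RealInnerProductSpace

/-!
Matrices carry the trace inner product `⟪X, Y⟫ = tr (Xᵀ Y)`, whose norm is the Frobenius norm.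
For it the pseudo-gradient is `M`-strongly monotone (the symmetric part of `G` dominates `μ` and
`W Wᵀ` dominates its least eigenvalue) and `L`-Lipschitz (`‖G Δ W Wᵀ‖_F ≤ ‖G‖₂ ‖Δ‖_F ‖W‖₂²`).
Expanding the square then shows that the forward step `x ↦ x - η F x` is Lipschitz with constant
`√(1 - η (2M - η L²)) < 1`, and the metric projection onto a convex set is nonexpansive, so the
forward-backward map is a contraction. Its Banach fixed point solves the variational inequality,
the solution is unique by strong monotonicity, and the iterates converge to it geometrically.
-/

open Filter Topology

section ProjectedGradient

variable {E : Type*} [NormedAddCommGroup E] [InnerProductSpace ℝ E] {K : Set E}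

theorem real_inner_sub_le_zero_of_forall_norm_sub_le (hK : Convex ℝ K) {u v : E} (hv : v ∈ K)
    (hmin : ∀ w ∈ K, ‖u - v‖ ≤ ‖u - w‖) {w : E} (hw : w ∈ K) : ⟪u - v, w - v⟫ ≤ 0 := by
  have : Nonempty K := ⟨⟨v, hv⟩⟩
  have hinf : ‖u - v‖ = ⨅ w : K, ‖u - w‖ :=
    le_antisymm (le_ciInf fun w => hmin w w.2)
      (ciInf_le ⟨0, Set.forall_mem_range.2 fun _ => norm_nonneg _⟩ (⟨v, hv⟩ : K))
  exact (norm_eq_iInf_iff_real_inner_le_zero hK hv).1 hinf w hw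

variable {p : E → E}

theorem norm_sub_le_of_forall_norm_sub_le (hK : Convex ℝ K)
    (hp : ∀ x, p x ∈ K ∧ ∀ y ∈ K, ‖x - p x‖ ≤ ‖x - y‖) (x y : E) :
    ‖p x - p y‖ ≤ ‖x - y‖ := by
  have hx := real_inner_sub_le_zero_of_forall_norm_sub_le hK (hp x).1 (hp x).2 (hp y).1
  have hy := real_inner_sub_le_zero_of_forall_norm_sub_le hK (hp y).1 (hp y).2 (hp x).1
  have key : ‖p x - p y‖ ^ 2 ≤ ‖x - y‖ * ‖p x - p y‖ := calc
    ‖p x - p y‖ ^ 2 ≤ ⟪x - y, p x - p y⟫ := by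
      rw [← neg_sub (p x) (p y), inner_neg_right] at hx
      have : x - y = (p x - p y) + ((x - p x) - (y - p y)) := by abel
      rw [this, inner_add_left, real_inner_self_eq_norm_sq, inner_sub_left]
      linarith
    _ ≤ ‖x - y‖ * ‖p x - p y‖ := real_inner_le_norm _ _
  nlinarith [norm_nonneg (p x - p y), norm_nonneg (x - y)]

variable {F : E → E} {M L η : ℝ}

theorem norm_sub_smul_sub_sq_le (hη : 0 ≤ η)
    (hmono : ∀ x y, M * ‖x - y‖ ^ 2 ≤ ⟪F x - F y, x - y⟫)
    (hlip : ∀ x y, ‖F x - F y‖ ≤ L * ‖x - y‖) (x y : E) :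
    ‖(x - η • F x) - (y - η • F y)‖ ^ 2 ≤ (1 - η * (2 * M - η * L ^ 2)) * ‖x - y‖ ^ 2 := by
  have hsq : ‖F x - F y‖ ^ 2 ≤ L ^ 2 * ‖x - y‖ ^ 2 := by
    rw [← mul_pow]; exact pow_le_pow_left₀ (norm_nonneg _) (hlip x y) 2
  have : (x - η • F x) - (y - η • F y) = (x - y) - η • (F x - F y) := by
    rw [smul_sub]; abel
  rw [this, norm_sub_sq_real, real_inner_smul_right, real_inner_comm, norm_smul, mul_pow,
    Real.norm_eq_abs, sq_abs]
  nlinarith [mul_le_mul_of_nonneg_left (hmono x y) hη,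
    mul_le_mul_of_nonneg_left hsq (sq_nonneg η)]

theorem sub_mul_sq_pos_of_lt_div (hη : 0 < η) (hη2 : η < 2 * M / L ^ 2) :
    0 < 2 * M - η * L ^ 2 := by
  have hL : 0 < L ^ 2 := by
    refine (sq_nonneg L).lt_of_ne fun h => ?_
    rw [← h, div_zero] at hη2
    exact hη.not_gt hη2
  rw [lt_div_iff₀ hL] at hη2
  linarith

theorem sqrt_one_sub_lt_one (hη : 0 < η) (hη2 : η < 2 * M / L ^ 2) :
    Real.sqrt (1 - η * (2 * M - η * L ^ 2)) < 1 := by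
  rw [Real.sqrt_lt' one_pos]
  nlinarith [sub_mul_sq_pos_of_lt_div hη hη2]

variable (p F η) in
def projGradStep (x : E) : E := p (x - η • F x)

theorem norm_projGradStep_sub_le (hK : Convex ℝ K)
    (hp : ∀ x, p x ∈ K ∧ ∀ y ∈ K, ‖x - p x‖ ≤ ‖x - y‖) (hη : 0 ≤ η)
    (hmono : ∀ x y, M * ‖x - y‖ ^ 2 ≤ ⟪F x - F y, x - y⟫)
    (hlip : ∀ x y, ‖F x - F y‖ ≤ L * ‖x - y‖) (x y : E) :
    ‖projGradStep p F η x - projGradStep p F η y‖ ≤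
      Real.sqrt (1 - η * (2 * M - η * L ^ 2)) * ‖x - y‖ := calc
  _ ≤ ‖(x - η • F x) - (y - η • F y)‖ := norm_sub_le_of_forall_norm_sub_le hK hp _ _
  _ ≤ Real.sqrt ((1 - η * (2 * M - η * L ^ 2)) * ‖x - y‖ ^ 2) :=
    (abs_norm _).symm.trans_le (Real.abs_le_sqrt (norm_sub_smul_sub_sq_le hη hmono hlip x y))
  _ = _ := by rw [Real.sqrt_mul' _ (sq_nonneg _), Real.sqrt_sq (norm_nonneg _)]

theorem real_inner_nonneg_of_projGradStep_eq (hK : Convex ℝ K)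
    (hp : ∀ x, p x ∈ K ∧ ∀ y ∈ K, ‖x - p x‖ ≤ ‖x - y‖) (hη : 0 < η) {x : E}
    (hx : projGradStep p F η x = x) {y : E} (hy : y ∈ K) : 0 ≤ ⟪F x, y - x⟫ := by
  have h := real_inner_sub_le_zero_of_forall_norm_sub_le hK (hp (x - η • F x)).1
    (hp (x - η • F x)).2 hy
  rw [show p (x - η • F x) = x from hx, sub_sub_cancel_left, inner_neg_left,
    real_inner_smul_left] at h
  exact nonneg_of_mul_nonneg_right (neg_nonpos.1 h) hη

theorem eq_of_real_inner_nonneg (hM : 0 < M)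
    (hmono : ∀ x y, M * ‖x - y‖ ^ 2 ≤ ⟪F x - F y, x - y⟫) {x y : E} (hxK : x ∈ K) (hyK : y ∈ K)
    (hx : ∀ z ∈ K, 0 ≤ ⟪F x, z - x⟫) (hy : ∀ z ∈ K, 0 ≤ ⟪F y, z - y⟫) : x = y := by
  have h1 := hx y hyK
  have h2 := hy x hxK
  have h3 := hmono x y
  rw [← neg_sub x y, inner_neg_right] at h1
  rw [inner_sub_left] at h3
  have hle : M * ‖x - y‖ ^ 2 ≤ 0 := by linarith
  rw [← sub_eq_zero, ← norm_eq_zero, ← sq_eq_zero_iff]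
  exact le_antisymm (nonpos_of_mul_nonpos_right hle hM) (sq_nonneg _)

theorem exists_real_inner_nonneg_tendsto_projGradStep [CompleteSpace E] (hK : Convex ℝ K)
    (hp : ∀ x, p x ∈ K ∧ ∀ y ∈ K, ‖x - p x‖ ≤ ‖x - y‖)
    (hmono : ∀ x y, M * ‖x - y‖ ^ 2 ≤ ⟪F x - F y, x - y⟫)
    (hlip : ∀ x y, ‖F x - F y‖ ≤ L * ‖x - y‖) (hη : 0 < η) (hη2 : η < 2 * M / L ^ 2) :
    ∃ xstar ∈ K, (∀ y ∈ K, 0 ≤ ⟪F xstar, y - xstar⟫) ∧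
      (∀ z ∈ K, (∀ y ∈ K, 0 ≤ ⟪F z, y - z⟫) → z = xstar) ∧
      Real.sqrt (1 - η * (2 * M - η * L ^ 2)) < 1 ∧
      ∀ u : ℕ → E, (∀ k, u (k + 1) = p (u k - η • F (u k))) →
        (∀ k, ‖u (k + 1) - xstar‖ ≤
          Real.sqrt (1 - η * (2 * M - η * L ^ 2)) * ‖u k - xstar‖) ∧
        Tendsto u atTop (𝓝 xstar) := by
  have hM : 0 < M := by
    nlinarith [sub_mul_sq_pos_of_lt_div hη hη2, mul_nonneg hη.le (sq_nonneg L)]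
  have hstep := norm_projGradStep_sub_le hK hp hη.le hmono hlip
  have hq := sqrt_one_sub_lt_one hη hη2
  have hT : ContractingWith ⟨_, Real.sqrt_nonneg (1 - η * (2 * M - η * L ^ 2))⟩
      (projGradStep p F η) :=
    ⟨hq, LipschitzWith.of_dist_le_mul fun x y => by
      rw [dist_eq_norm, dist_eq_norm]; exact hstep x y⟩
  set xstar := ContractingWith.fixedPoint _ hT
  have hfix : projGradStep p F η xstar = xstar := hT.fixedPoint_isFixedPt
  have hxK : xstar ∈ K := hfix ▸ (hp _).1
  have hvi (y : E) (hy : y ∈ K) := real_inner_nonneg_of_projGradStep_eq hK hp hη hfix hy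
  refine ⟨xstar, hxK, hvi, fun z hzK hz => eq_of_real_inner_nonneg hM hmono hzK hxK hz hvi, hq,
    fun u hu => ⟨fun k => ?_, ?_⟩⟩
  · calc ‖u (k + 1) - xstar‖ = ‖projGradStep p F η (u k) - projGradStep p F η xstar‖ := by
          rw [hfix, hu k, projGradStep]
      _ ≤ _ := hstep (u k) xstar
  · have hiter : u = fun k => (projGradStep p F η)^[k] (u 0) := by
      funext k
      induction k with
      | zero => rfl
      | succ k ih => rw [hu k, ih, Function.iterate_succ_apply']; rfl
    rw [hiter]
    exact hT.tendsto_iterate_fixedPoint (u 0)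

end ProjectedGradient

namespace Matrix

section Trace

variable {n : Type*} [Fintype n]

theorem PosSemidef.trace_mul_nonneg {A B : Matrix n n ℝ} (hA : A.PosSemidef)
    (hB : B.PosSemidef) : 0 ≤ (A * B).trace := by
  classical
  obtain ⟨C, rfl⟩ : ∃ C : Matrix n n ℝ, B = star C * C := by
    open MatrixOrder in exact CStarAlgebra.nonneg_iff_eq_star_mul_self.1 hB.nonneg
  rw [← Matrix.mul_assoc, trace_mul_cycle]
  exact (hA.mul_mul_conjTranspose_same C).trace_nonneg

theorem mul_trace_le_trace_mul [DecidableEq n] {A B : Matrix n n ℝ} {c : ℝ}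
    (hA : (A - c • 1).PosSemidef) (hB : B.PosSemidef) : c * B.trace ≤ (A * B).trace := by
  have := hA.trace_mul_nonneg hB
  rwa [Matrix.sub_mul, Matrix.smul_mul, Matrix.one_mul, trace_sub, trace_smul, smul_eq_mul,
    sub_nonneg] at this

open MatrixOrder in
theorem IsHermitian.posSemidef_sub_iInf_eigenvalues_smul [DecidableEq n] {S : Matrix n n ℝ}
    (hS : S.IsHermitian) : (S - (⨅ i, hS.eigenvalues i) • 1).PosSemidef := by
  rw [← Matrix.le_iff, ← Algebra.algebraMap_eq_smul_one,
    algebraMap_le_iff_le_spectrum (hS.isSelfAdjoint), hS.spectrum_real_eq_range_eigenvalues]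
  rintro _ ⟨i, rfl⟩
  exact ciInf_le (Finite.bddBelow_range _) i

-- The symmetric part of `G` is what pairs with the symmetric matrix `Δ S Δᵀ`.
theorem mul_mul_trace_transpose_mul_self_le {m : Type*} [Fintype m] [DecidableEq m] [DecidableEq n]
    {G : Matrix m m ℝ} {S : Matrix n n ℝ} {μ t : ℝ} (hμ : 0 ≤ μ)
    (hG : (((1 : ℝ) / 2) • (G + Gᵀ) - μ • 1).PosSemidef) (hS : S.PosSemidef)
    (hSt : (S - t • 1).PosSemidef) (Δ : Matrix m n ℝ) :
    μ * t * trace (Δᵀ * Δ) ≤ trace ((G * Δ * S)ᵀ * Δ) := by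
  have hSsymm : Sᵀ = S := by rw [← conjTranspose_eq_transpose_of_trivial]; exact hS.1
  set Q := Δ * S * Δᵀ
  have hQ : Q.PosSemidef := by
    simpa [conjTranspose_eq_transpose_of_trivial] using hS.mul_mul_conjTranspose_same Δ
  have hQsymm : Qᵀ = Q := by rw [← conjTranspose_eq_transpose_of_trivial]; exact hQ.1
  have hGQ : trace (G * Q) = trace (Gᵀ * Q) := by
    rw [← trace_transpose, transpose_mul, hQsymm, trace_mul_comm]
  have hsymm : trace ((G * Δ * S)ᵀ * Δ) = trace ((((1 : ℝ) / 2) • (G + Gᵀ)) * Q) := by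
    rw [Matrix.smul_mul, trace_smul, Matrix.add_mul, trace_add, hGQ, transpose_mul, transpose_mul,
      hSsymm, smul_eq_mul, ← two_mul, ← mul_assoc, one_div_mul_cancel two_ne_zero, one_mul,
      trace_mul_cycle, ← Matrix.mul_assoc, trace_mul_cycle]
    simp only [Q, Matrix.mul_assoc]
  have hQt : t * trace (Δᵀ * Δ) ≤ trace Q := by
    have := mul_trace_le_trace_mul hSt (posSemidef_conjTranspose_mul_self Δ)
    rwa [conjTranspose_eq_transpose_of_trivial, ← Matrix.mul_assoc, trace_mul_cycle] at this
  calc μ * t * trace (Δᵀ * Δ) ≤ μ * trace Q := by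
        rw [mul_assoc]; exact mul_le_mul_of_nonneg_left hQt hμ
    _ ≤ _ := mul_trace_le_trace_mul hG hQ
    _ = _ := hsymm.symm

end Trace

section SpecNorm

open scoped Norms.L2Operator

variable {a b : ℕ}

theorem specNorm_eq_l2_opNorm (A : Matrix (Fin a) (Fin b) ℝ) : specNorm A = ‖A‖ := rfl

theorem specNorm_nonneg (A : Matrix (Fin a) (Fin b) ℝ) : 0 ≤ specNorm A := norm_nonneg _

theorem specNorm_transpose (A : Matrix (Fin a) (Fin b) ℝ) : specNorm Aᵀ = specNorm A := by
  simpa only [specNorm_eq_l2_opNorm, conjTranspose_eq_transpose_of_trivial] using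
    l2_opNorm_conjTranspose A

theorem specNorm_mul_transpose_self (A : Matrix (Fin a) (Fin b) ℝ) :
    specNorm (A * Aᵀ) = specNorm A ^ 2 := by
  have := l2_opNorm_conjTranspose_mul_self Aᵀ
  rw [conjTranspose_eq_transpose_of_trivial, transpose_transpose] at this
  rw [specNorm_eq_l2_opNorm, this, ← specNorm_eq_l2_opNorm, specNorm_transpose, sq]

theorem norm_toLp_mulVec_le (A : Matrix (Fin a) (Fin b) ℝ) (v : Fin b → ℝ) :
    ‖WithLp.toLp 2 (A *ᵥ v)‖ ≤ specNorm A * ‖WithLp.toLp 2 v‖ :=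
  (LinearMap.toContinuousLinearMap (toEuclideanLin A)).le_opNorm (WithLp.toLp 2 v)

end SpecNorm

section Frobenius

variable {m n : Type*} [Fintype m] [Fintype n] {a b c d : ℕ}

attribute [local instance] frobeniusNormedAddCommGroup frobeniusNormedSpace

theorem frobenius_norm_sq_eq_sum (X : Matrix m n ℝ) :
    ‖X‖ ^ 2 = ∑ i, ‖WithLp.toLp 2 (X i)‖ ^ 2 :=
  PiLp.norm_sq_eq_of_L2 _ (WithLp.toLp 2 fun i => WithLp.toLp 2 (X i))

theorem frobenius_norm_sq_eq_trace (X : Matrix m n ℝ) : ‖X‖ ^ 2 = trace (Xᵀ * X) := by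
  rw [frobenius_norm_def, ← Real.sqrt_eq_rpow, Real.sq_sqrt (by positivity), Finset.sum_comm]
  simp [trace, mul_apply, sq]

-- Built over Mathlib's Frobenius norm, so that the topology stays the product topology of `Matrix`.
noncomputable abbrev frobeniusInnerProductSpace : InnerProductSpace ℝ (Matrix m n ℝ) where
  inner X Y := trace (Xᵀ * Y)
  norm_sq_eq_re_inner := frobenius_norm_sq_eq_trace
  conj_inner_symm X Y := by simp [← trace_transpose (Xᵀ * Y)]
  add_left X Y Z := by simp [Matrix.add_mul]
  smul_left X Y r := by simp

attribute [local instance] frobeniusInnerProductSpace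

theorem frobNorm_eq_norm (X : Matrix (Fin a) (Fin b) ℝ) : frobNorm X = ‖X‖ := by
  rw [frobNorm, norm_eq_sqrt_real_inner]
  rfl

theorem frobenius_norm_mul_le_specNorm_mul (A : Matrix (Fin a) (Fin b) ℝ)
    (X : Matrix (Fin b) (Fin c) ℝ) : ‖A * X‖ ≤ specNorm A * ‖X‖ := by
  rw [← frobenius_norm_transpose (A * X), ← frobenius_norm_transpose X]
  refine (pow_le_pow_iff_left₀ (norm_nonneg _)
    (mul_nonneg (specNorm_nonneg A) (norm_nonneg _)) two_ne_zero).1 ?_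
  rw [mul_pow, frobenius_norm_sq_eq_sum, frobenius_norm_sq_eq_sum, Finset.mul_sum]
  refine Finset.sum_le_sum fun j _ => ?_
  rw [← mul_pow]
  exact pow_le_pow_left₀ (norm_nonneg _) (norm_toLp_mulVec_le A (Xᵀ j)) 2

theorem frobenius_norm_mul_le_mul_specNorm (X : Matrix (Fin a) (Fin b) ℝ)
    (B : Matrix (Fin b) (Fin c) ℝ) : ‖X * B‖ ≤ ‖X‖ * specNorm B := by
  rw [← frobenius_norm_transpose, transpose_mul, ← frobenius_norm_transpose X, mul_comm,
    ← specNorm_transpose B]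
  exact frobenius_norm_mul_le_specNorm_mul _ _

theorem frobNorm_sq (X : Matrix (Fin a) (Fin b) ℝ) : frobNorm X ^ 2 = trace (Xᵀ * X) := by
  rw [frobNorm_eq_norm, frobenius_norm_sq_eq_trace]

theorem frobNorm_smul (r : ℝ) (X : Matrix (Fin a) (Fin b) ℝ) :
    frobNorm (r • X) = |r| * frobNorm X := by
  rw [frobNorm_eq_norm, frobNorm_eq_norm, norm_smul, Real.norm_eq_abs]

theorem frobNorm_mul_mul_le (A : Matrix (Fin a) (Fin b) ℝ) (X : Matrix (Fin b) (Fin c) ℝ)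
    (B : Matrix (Fin c) (Fin d) ℝ) :
    frobNorm (A * X * B) ≤ specNorm A * frobNorm X * specNorm B := by
  rw [frobNorm_eq_norm, frobNorm_eq_norm, Matrix.mul_assoc, mul_assoc]
  exact (frobenius_norm_mul_le_specNorm_mul A _).trans
    (mul_le_mul_of_nonneg_left (frobenius_norm_mul_le_mul_specNorm X B) (specNorm_nonneg A))

theorem exists_trace_nonneg_tendsto_projGrad {U : Set (Matrix (Fin a) (Fin b) ℝ)}
    (hU : Convex ℝ U) {proj F : Matrix (Fin a) (Fin b) ℝ → Matrix (Fin a) (Fin b) ℝ}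
    (hproj : ∀ X, proj X ∈ U ∧ ∀ Y ∈ U, frobNorm (X - proj X) ≤ frobNorm (X - Y)) {M L η : ℝ}
    (hmono : ∀ X Y, M * frobNorm (X - Y) ^ 2 ≤ trace ((F X - F Y)ᵀ * (X - Y)))
    (hlip : ∀ X Y, frobNorm (F X - F Y) ≤ L * frobNorm (X - Y)) (hη : 0 < η)
    (hη2 : η < 2 * M / L ^ 2) :
    ∃ Φstar ∈ U, (∀ Φ ∈ U, 0 ≤ trace ((F Φstar)ᵀ * (Φ - Φstar))) ∧
      (∀ Ψ ∈ U, (∀ Φ ∈ U, 0 ≤ trace ((F Ψ)ᵀ * (Φ - Ψ))) → Ψ = Φstar) ∧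
      Real.sqrt (1 - η * (2 * M - η * L ^ 2)) < 1 ∧
      ∀ seq : ℕ → Matrix (Fin a) (Fin b) ℝ, (∀ k, seq (k + 1) = proj (seq k - η • F (seq k))) →
        (∀ k, frobNorm (seq (k + 1) - Φstar) ≤
          Real.sqrt (1 - η * (2 * M - η * L ^ 2)) * frobNorm (seq k - Φstar)) ∧
        Tendsto seq atTop (𝓝 Φstar) := by
  simp only [frobNorm_eq_norm] at *
  exact exists_real_inner_nonneg_tendsto_projGradStep hU hproj hmono hlip hη hη2

end Frobenius

end Matrix

theorem stmt10_general {a b c : ℕ} (G : Matrix (Fin a) (Fin a) ℝ) (μ : ℝ) (hμ : 0 < μ)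
    (hG : (((1 : ℝ) / 2) • (G + Gᵀ) - μ • (1 : Matrix (Fin a) (Fin a) ℝ)).PosSemidef)
    (W : Matrix (Fin b) (Fin c) ℝ) (hWW : (W * Wᵀ).PosDef)
    (h : Matrix (Fin a) (Fin b) ℝ)
    (U : Set (Matrix (Fin a) (Fin b) ℝ))
    (hUcv : Convex ℝ U)
    (M L : ℝ) (hM : M = 2 * μ * ⨅ i, hWW.1.eigenvalues i)
    (hL : L = 2 * specNorm G * specNorm W ^ 2)
    (η : ℝ) (hη : 0 < η) (hη2 : η < 2 * M / L ^ 2)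
    (proj : Matrix (Fin a) (Fin b) ℝ → Matrix (Fin a) (Fin b) ℝ)
    (hproj : ∀ X, proj X ∈ U ∧ ∀ Y ∈ U, frobNorm (X - proj X) ≤ frobNorm (X - Y)) :
    ∃ Φstar ∈ U,
      (∀ Φ ∈ U,
        0 ≤ Matrix.trace (((2 : ℝ) • (G * Φstar * (W * Wᵀ)) + h)ᵀ * (Φ - Φstar))) ∧
      (∀ Ψ ∈ U,
        (∀ Φ ∈ U,
          0 ≤ Matrix.trace (((2 : ℝ) • (G * Ψ * (W * Wᵀ)) + h)ᵀ * (Φ - Ψ))) →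
        Ψ = Φstar) ∧
      Real.sqrt (1 - η * (2 * M - η * L ^ 2)) < 1 ∧
      ∀ seq : ℕ → Matrix (Fin a) (Fin b) ℝ,
        (∀ k, seq (k + 1) =
          proj (seq k - η • ((2 : ℝ) • (G * seq k * (W * Wᵀ)) + h))) →
        (∀ k, frobNorm (seq (k + 1) - Φstar) ≤
            Real.sqrt (1 - η * (2 * M - η * L ^ 2)) * frobNorm (seq k - Φstar)) ∧
        Filter.Tendsto seq Filter.atTop (nhds Φstar) := by
  have hdiff (X Y : Matrix (Fin a) (Fin b) ℝ) :
      (2 : ℝ) • (G * X * (W * Wᵀ)) + h - ((2 : ℝ) • (G * Y * (W * Wᵀ)) + h) =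
        (2 : ℝ) • (G * (X - Y) * (W * Wᵀ)) := by
    rw [add_sub_add_right_eq_sub, ← smul_sub, ← Matrix.sub_mul, ← Matrix.mul_sub]
  refine Matrix.exists_trace_nonneg_tendsto_projGrad hUcv hproj (fun X Y => ?_) (fun X Y => ?_)
    hη hη2
  · have hquad := Matrix.mul_mul_trace_transpose_mul_self_le hμ.le hG hWW.posSemidef
      hWW.1.posSemidef_sub_iInf_eigenvalues_smul (X - Y)
    rw [hdiff, hM, Matrix.frobNorm_sq, Matrix.transpose_smul, Matrix.smul_mul,
      Matrix.trace_smul, smul_eq_mul]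
    linarith
  · have hnorm := Matrix.frobNorm_mul_mul_le G (X - Y) (W * Wᵀ)
    rw [Matrix.specNorm_mul_transpose_self] at hnorm
    rw [hdiff, Matrix.frobNorm_smul, hL, abs_two]
    linarith

/-- Convergence of forward-backward vGFNE seeking for the affine
pseudo-gradient `F(Φ) = 2 G Φ (W Wᵀ) + h`: with `M = 2 μ λ_min(W Wᵀ)`,
`L = 2‖G‖₂‖W‖₂²` and `η ∈ (0, 2M/L²)`, the variational inequality over the nonempty
closed convex set `U` has a unique solution `Φ*`, and the projected-gradient iterates
contract towards it with rate `√(1 - η(2M - ηL²)) < 1`, hence converge linearly. -/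
theorem stmt10 {a b c : ℕ} (G : Matrix (Fin a) (Fin a) ℝ) (μ : ℝ) (hμ : 0 < μ)
    (hG : (((1 : ℝ) / 2) • (G + Gᵀ) - μ • (1 : Matrix (Fin a) (Fin a) ℝ)).PosSemidef)
    (W : Matrix (Fin b) (Fin c) ℝ) (hWW : (W * Wᵀ).PosDef)
    (h : Matrix (Fin a) (Fin b) ℝ)
    (U : Set (Matrix (Fin a) (Fin b) ℝ)) (hUne : U.Nonempty) (hUcl : IsClosed U)
    (hUcv : Convex ℝ U)
    (M L : ℝ) (hM : M = 2 * μ * ⨅ i, hWW.1.eigenvalues i)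
    (hL : L = 2 * specNorm G * specNorm W ^ 2)
    (η : ℝ) (hη : 0 < η) (hη2 : η < 2 * M / L ^ 2)
    (proj : Matrix (Fin a) (Fin b) ℝ → Matrix (Fin a) (Fin b) ℝ)
    (hproj : ∀ X, proj X ∈ U ∧ ∀ Y ∈ U, frobNorm (X - proj X) ≤ frobNorm (X - Y)) :
    ∃ Φstar ∈ U,
      (∀ Φ ∈ U,
        0 ≤ Matrix.trace (((2 : ℝ) • (G * Φstar * (W * Wᵀ)) + h)ᵀ * (Φ - Φstar))) ∧
      (∀ Ψ ∈ U,
        (∀ Φ ∈ U,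
          0 ≤ Matrix.trace (((2 : ℝ) • (G * Ψ * (W * Wᵀ)) + h)ᵀ * (Φ - Ψ))) →
        Ψ = Φstar) ∧
      Real.sqrt (1 - η * (2 * M - η * L ^ 2)) < 1 ∧
      ∀ seq : ℕ → Matrix (Fin a) (Fin b) ℝ,
        (∀ k, seq (k + 1) =
          proj (seq k - η • ((2 : ℝ) • (G * seq k * (W * Wᵀ)) + h))) →
        (∀ k, frobNorm (seq (k + 1) - Φstar) ≤
            Real.sqrt (1 - η * (2 * M - η * L ^ 2)) * frobNorm (seq k - Φstar)) ∧
        Filter.Tendsto seq Filter.atTop (nhds Φstar) :=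
  stmt10_general G μ hμ hG W hWW h U hUcv M L hM hL η hη hη2 proj hproj
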